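/- Let d ∈ {2,3}, let x_1,…,x_N be pairwise distinct points in ℝ^d with particle volumes V_1,…,V_N > 0, let w be a reference weight function with support radius r₀, and h > 0. Let the index set be partitioned into Λ_fl, Λ_sf, Λ_wl, and assume the surface connectivity condition: for every i ∈ Λ_fl there is a finite sequence of indices i = i_1, i_2, …, i_ζ with i_1,…,i_{ζ−1} ∈ Λ_fl, i_ζ ∈ Λ_sf, and 0 < |x_{i_l} − x_{i_{l+1}}| < r₀ h for 1 ≤ l < ζ. Define Â as in the pressure Poisson system: Â_ij := −C_ij for i ≠ j ∈ Λ_fl and Â_ii := Σ_{l ∈ (Λ_fl ∪ Λ_sf) \ {i}} (V_l / V_i) C_il, where C_ij := −2 ẇ_h(|x_i − x_j|)/|x_i − x_j| (i ≠ j), C_ii := 0. Then Â is a symmetric positive definite matrix; consequently, with D := diag(V_i)_{i ∈ Λ_fl}, the linear system Â D p = b has a unique solution p for every right-hand side b, i.e. the discrete pressure Poisson equation of the ISPH method is uniquely solvable. -/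

import Mathlib

open MeasureTheory Finset
open scoped BigOperators RealInnerProductSpace

noncomputable section

namespace ISPH

/-- Points of `ℝ^d`. -/
abbrev Pt (d : ℕ) := EuclideanSpace ℝ (Fin d)

/-- A reference weight function for dimension `d` with support radius `r₀`. -/
structure IsRefWeight (d : ℕ) (w : ℝ → ℝ) (r₀ : ℝ) : Prop where
  r0_pos : 0 < r₀
  smooth : ContDiffOn ℝ 2 w (Set.Ici 0)
  pos : ∀ r : ℝ, 0 < r → r < r₀ → 0 < w r
  eq_zero : ∀ r : ℝ, r₀ ≤ r → w r = 0
  deriv_neg : ∀ r : ℝ, 0 < r → r < r₀ → deriv w r < 0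
  deriv_zero : deriv w 0 = 0
  deriv_eq_zero : ∀ r : ℝ, r₀ ≤ r → deriv w r = 0
  unity : (∫ y : Pt d, w ‖y‖) = 1

/-- The scaled weight function `w_h`. -/
def wh (d : ℕ) (h : ℝ) (w : ℝ → ℝ) : ℝ → ℝ := fun r => (h ^ d)⁻¹ * w (r / h)

/-- `ẇ_h`, the derivative of the scaled weight function. -/
def dwh (d : ℕ) (h : ℝ) (w : ℝ → ℝ) : ℝ → ℝ := deriv (wh d h w)

variable {d N : ℕ}

/-- `∇w_h(|x i − x j|)`; equal to `0` when `i = j`. -/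
def gradW (x : Fin N → Pt d) (dw : ℝ → ℝ) (i j : Fin N) : Pt d :=
  (dw ‖x i - x j‖ / ‖x i - x j‖) • (x i - x j)

/-- `C i j = −2 ẇ_h(|x_i − x_j|)/|x_i − x_j|` off the diagonal, `0` on it. -/
def Cmat (x : Fin N → Pt d) (dw : ℝ → ℝ) (i j : Fin N) : ℝ :=
  if i = j then 0 else -2 * dw ‖x i - x j‖ / ‖x i - x j‖

/-- Discrete divergence over `Λ`. -/
def dDiv (x : Fin N → Pt d) (V : Fin N → ℝ) (dw : ℝ → ℝ) (Λ : Finset (Fin N))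
    (φ : Fin N → Pt d) (i : Fin N) : ℝ :=
  ∑ j ∈ Λ, V j * ⟪φ j + φ i, gradW x dw i j⟫

/-- Discrete gradient over `Λ`. -/
def dGrad (x : Fin N → Pt d) (V : Fin N → ℝ) (dw : ℝ → ℝ) (Λ : Finset (Fin N))
    (ψ : Fin N → ℝ) (i : Fin N) : Pt d :=
  ∑ j ∈ Λ, (V j * (ψ j - ψ i)) • gradW x dw i j

/-- Discrete Laplacian over `Λ` (for scalar- or vector-valued functions). -/
def dLap {F : Type*} [NormedAddCommGroup F] [NormedSpace ℝ F]
    (x : Fin N → Pt d) (V : Fin N → ℝ) (dw : ℝ → ℝ) (Λ : Finset (Fin N))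
    (φ : Fin N → F) (i : Fin N) : F :=
  (2 : ℝ) • ∑ j ∈ Λ.erase i,
    ((V j / ‖x i - x j‖) * ⟪‖x i - x j‖⁻¹ • (x i - x j), gradW x dw i j⟫) • (φ i - φ j)

/-- Discrete inner product over `Λ`. -/
def dInner {F : Type*} [NormedAddCommGroup F] [InnerProductSpace ℝ F]
    (V : Fin N → ℝ) (Λ : Finset (Fin N)) (φ ψ : Fin N → F) : ℝ :=
  ∑ i ∈ Λ, V i * ⟪φ i, ψ i⟫

/-- Square of the discrete `L²` norm over `Λ`. -/
def l2normSq {F : Type*} [NormedAddCommGroup F]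
    (V : Fin N → ℝ) (Λ : Finset (Fin N)) (φ : Fin N → F) : ℝ :=
  ∑ i ∈ Λ, V i * ‖φ i‖ ^ 2

/-- Discrete `L²` norm over `Λ`. -/
def l2norm {F : Type*} [NormedAddCommGroup F]
    (V : Fin N → ℝ) (Λ : Finset (Fin N)) (φ : Fin N → F) : ℝ :=
  Real.sqrt (l2normSq V Λ φ)

/-- Square of the discrete `H¹₀` seminorm over `Λ`. -/
def h1semiSq {F : Type*} [NormedAddCommGroup F]
    (x : Fin N → Pt d) (V : Fin N → ℝ) (dw : ℝ → ℝ) (Λ : Finset (Fin N))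
    (φ : Fin N → F) : ℝ :=
  ∑ i ∈ Λ, V i * ∑ j ∈ Λ.erase i,
    V j * (‖φ i - φ j‖ ^ 2 / ‖x i - x j‖) * |dw ‖x i - x j‖|

/-- Discrete `H¹₀` seminorm over `Λ`. -/
def h1semi {F : Type*} [NormedAddCommGroup F]
    (x : Fin N → Pt d) (V : Fin N → ℝ) (dw : ℝ → ℝ) (Λ : Finset (Fin N))
    (φ : Fin N → F) : ℝ :=
  Real.sqrt (h1semiSq x V dw Λ φ)

/-- Discrete `H₀⁻¹` seminorm over `Λ`. -/
def hm1semi {F : Type*} [NormedAddCommGroup F] [InnerProductSpace ℝ F]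
    (x : Fin N → Pt d) (V : Fin N → ℝ) (dw : ℝ → ℝ) (Λ : Finset (Fin N))
    (φ : Fin N → F) : ℝ :=
  sSup { r : ℝ | ∃ χ : Fin N → F, h1semi x V dw Λ χ ≠ 0 ∧
    r = dInner V Λ φ χ / h1semi x V dw Λ χ }

/-- There is a chain from `i` ending in `target`, with all indices before the last
one in `inter`, and consecutive distances strictly between `0` and `R`. -/
def Chain (x : Fin N → Pt d) (R : ℝ) (inter target : Finset (Fin N)) (i : Fin N) : Prop :=
  ∃ (ζ : ℕ) (c : ℕ → Fin N), c 0 = i ∧ (∀ l < ζ, c l ∈ inter) ∧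
    (∀ l < ζ, 0 < ‖x (c l) - x (c (l + 1))‖ ∧ ‖x (c l) - x (c (l + 1))‖ < R) ∧
    c ζ ∈ target

end ISPH

open ISPH

/-!
With `D = diag(V)`, the matrix `D Â D` is the Laplacian of the weighted graph on the
fluid particles with edge weights `K i j = V i V j C i j ≥ 0`, plus the Dirichlet term
`b i = ∑_{l ∈ Λsf} V i V l C i l ≥ 0` on the diagonal. Its quadratic form is
`½ ∑ K i j (v i - v j)² + ∑ b i (v i)²`; if it vanishes, `v` is constant along edges of positive
weight and zero where `b` is positive. Edges between particles closer than `r₀ h` have positive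
weight since `ẇ < 0` there, so the surface connectivity condition lets every fluid particle reach
a particle with `b > 0`, whence `v = 0`. Positive definiteness passes from `D Â D` to `Â`, and
`Â D` is invertible.
-/

open Matrix Finset

section DirichletLaplacian

variable {ι : Type*} [Fintype ι] [DecidableEq ι]

def dirichletLaplacian (K : Matrix ι ι ℝ) (b : ι → ℝ) : Matrix ι ι ℝ :=
  diagonal (fun i => ∑ j, K i j + b i) - K

lemma dotProduct_dirichletLaplacian_mulVec {K : Matrix ι ι ℝ} (hK : K.IsSymm) (b : ι → ℝ)
    (v : ι → ℝ) :
    v ⬝ᵥ (dirichletLaplacian K b *ᵥ v) =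
      (∑ i, ∑ j, K i j * (v i - v j) ^ 2) / 2 + ∑ i, b i * v i ^ 2 := by
  set F : ι → ι → ℝ := fun i j => K i j * (v i ^ 2 - v i * v j)
  have hedges : ∑ i, ∑ j, K i j * (v i - v j) ^ 2 = 2 * ∑ i, ∑ j, F i j := by
    have hsplit : ∀ i j, K i j * (v i - v j) ^ 2 = F i j + F j i := fun i j => by
      simp only [F, hK.apply i j]; ring
    simp only [hsplit, sum_add_distrib]
    rw [sum_comm (f := fun i j => F j i)]
    ring
  have hrow : ∀ i, v i * (dirichletLaplacian K b *ᵥ v) i = ∑ j, F i j + b i * v i ^ 2 := by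
    intro i
    rw [dirichletLaplacian, sub_mulVec, Pi.sub_apply, mulVec_diagonal]
    simp only [mulVec, dotProduct, F, mul_sub, sum_sub_distrib, add_mul, sum_mul, mul_add, mul_sum]
    ring_nf
  rw [hedges, dotProduct, sum_congr rfl fun i _ => hrow i, sum_add_distrib]
  ring

lemma posDef_dirichletLaplacian {K : Matrix ι ι ℝ} {b : ι → ℝ} (hK : K.IsSymm)
    (hK₀ : ∀ i j, 0 ≤ K i j) (hb₀ : ∀ i, 0 ≤ b i)
    (hreach : ∀ i, ∃ j, Relation.ReflTransGen (fun a c => 0 < K a c) i j ∧ 0 < b j) :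
    (dirichletLaplacian K b).PosDef := by
  have hsymm : (dirichletLaplacian K b).IsHermitian := by
    simp only [isHermitian_iff_isSymm, dirichletLaplacian]
    exact (isSymm_diagonal _).sub hK
  refine PosDef.of_dotProduct_mulVec_pos hsymm fun v hv => ?_
  rw [star_trivial, dotProduct_dirichletLaplacian_mulVec hK]
  have hedge_nonneg : ∀ i j, 0 ≤ K i j * (v i - v j) ^ 2 := fun i j => by
    have := hK₀ i j; positivity
  have hroot_nonneg : ∀ i, 0 ≤ b i * v i ^ 2 := fun i => by have := hb₀ i; positivity
  by_contra! hle
  have hE₀ : 0 ≤ ∑ i, ∑ j, K i j * (v i - v j) ^ 2 :=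
    sum_nonneg fun i _ => sum_nonneg fun j _ => hedge_nonneg i j
  have hB₀ : 0 ≤ ∑ i, b i * v i ^ 2 := sum_nonneg fun i _ => hroot_nonneg i
  have hE : ∑ i, ∑ j, K i j * (v i - v j) ^ 2 = 0 := by linarith
  have hB : ∑ i, b i * v i ^ 2 = 0 := by linarith
  have hedge : ∀ a c, 0 < K a c → v a = v c := by
    intro a c hac
    have h0 := (sum_eq_zero_iff_of_nonneg fun j _ => hedge_nonneg a j).1
      ((sum_eq_zero_iff_of_nonneg fun i _ => sum_nonneg fun j _ => hedge_nonneg i j).1 hE a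
        (mem_univ a)) c (mem_univ c)
    simpa [hac.ne', sub_eq_zero] using h0
  have hroot : ∀ j, 0 < b j → v j = 0 := by
    intro j hj
    simpa [hj.ne'] using (sum_eq_zero_iff_of_nonneg fun i _ => hroot_nonneg i).1 hB j (mem_univ j)
  have hconst : ∀ i j, Relation.ReflTransGen (fun a c => 0 < K a c) i j → v i = v j := by
    intro i j hij
    induction hij with
    | refl => rfl
    | tail _ hac ih => exact ih.trans (hedge _ _ hac)
  refine hv (funext fun i => ?_)
  obtain ⟨j, hij, hj⟩ := hreach i
  rw [hconst i j hij, hroot j hj]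
  rfl

end DirichletLaplacian

namespace ISPH

lemma dwh_eq (d : ℕ) (h : ℝ) (w : ℝ → ℝ) (r : ℝ) :
    dwh d h w r = (h ^ d)⁻¹ * (h⁻¹ * deriv w (r / h)) := by
  unfold dwh wh
  simp only [div_eq_inv_mul]
  rw [deriv_const_mul_field, deriv_comp_mul_left, smul_eq_mul]

variable {d N : ℕ} {w : ℝ → ℝ} {r₀ h : ℝ}

lemma dwh_nonpos (hw : IsRefWeight d w r₀) (hh : 0 < h) {r : ℝ} (hr : 0 < r) :
    dwh d h w r ≤ 0 := by
  rw [dwh_eq]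
  rcases lt_or_ge (r / h) r₀ with hlt | hge
  · have := hw.deriv_neg _ (div_pos hr hh) hlt
    have : 0 < (h ^ d)⁻¹ * h⁻¹ := by positivity
    nlinarith
  · simp [hw.deriv_eq_zero _ hge]

lemma dwh_neg (hw : IsRefWeight d w r₀) (hh : 0 < h) {r : ℝ} (hr : 0 < r) (hrh : r < r₀ * h) :
    dwh d h w r < 0 := by
  rw [dwh_eq]
  have := hw.deriv_neg _ (div_pos hr hh) ((div_lt_iff₀ hh).2 hrh)
  have : 0 < (h ^ d)⁻¹ * h⁻¹ := by positivity
  nlinarith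

lemma Cmat_comm (x : Fin N → Pt d) (dw : ℝ → ℝ) (i j : Fin N) : Cmat x dw i j = Cmat x dw j i := by
  unfold Cmat
  split_ifs with hij hji hji <;> simp_all [norm_sub_rev]

lemma Cmat_self (x : Fin N → Pt d) (dw : ℝ → ℝ) (i : Fin N) : Cmat x dw i i = 0 := if_pos rfl

variable {x : Fin N → Pt d} {dw : ℝ → ℝ}

lemma Cmat_nonneg (hdw : ∀ r, 0 < r → dw r ≤ 0) (i j : Fin N) : 0 ≤ Cmat x dw i j := by
  unfold Cmat
  split_ifs
  · rfl
  rcases (norm_nonneg (x i - x j)).eq_or_lt with h0 | hpos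
  · simp [← h0] -- coincident points: the quotient is `_ / 0 = 0`
  · have := hdw _ hpos
    exact div_nonneg (by linarith) hpos.le

lemma Cmat_pos {i j : Fin N} (hpos : 0 < ‖x i - x j‖) (hdw : dw ‖x i - x j‖ < 0) :
    0 < Cmat x dw i j := by
  have hij : i ≠ j := by rintro rfl; simp at hpos
  rw [Cmat, if_neg hij]
  exact div_pos (by linarith) hpos

lemma Chain.exists_reflTransGen {R : ℝ} {s t : Finset (Fin N)} {i : Fin N}
    (hc : Chain x R s t i) (hi : i ∈ s) (hit : i ∉ t) :
    ∃ j : s, Relation.ReflTransGen (fun a b : s => 0 < ‖x a - x b‖ ∧ ‖x a - x b‖ < R) ⟨i, hi⟩ j ∧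
      ∃ l ∈ t, 0 < ‖x j - x l‖ ∧ ‖x j - x l‖ < R := by
  obtain ⟨ζ, c, hc0, hmem, hstep, hlast⟩ := hc
  have hpath : ∀ l (hl : l < ζ), Relation.ReflTransGen
      (fun a b : s => 0 < ‖x a - x b‖ ∧ ‖x a - x b‖ < R) ⟨i, hi⟩ ⟨c l, hmem l hl⟩ := by
    intro l
    induction l with
    | zero => intro _; simp only [hc0]; rfl
    | succ l ih => exact fun hl => (ih (by omega)).tail (hstep l (by omega))
  obtain ⟨m, rfl⟩ : ∃ m, ζ = m + 1 :=
    Nat.exists_eq_succ_of_ne_zero (by rintro rfl; exact hit (hc0 ▸ hlast))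
  exact ⟨_, hpath m m.lt_succ_self, c (m + 1), hlast, hstep m m.lt_succ_self⟩

def fluidCoupling (x : Fin N → Pt d) (V : Fin N → ℝ) (dw : ℝ → ℝ) (Λfl : Finset (Fin N)) :
    Matrix Λfl Λfl ℝ :=
  Matrix.of fun i j => V i * V j * Cmat x dw i j

def surfaceCoupling (x : Fin N → Pt d) (V : Fin N → ℝ) (dw : ℝ → ℝ) (Λfl Λsf : Finset (Fin N)) :
    Λfl → ℝ :=
  fun i => ∑ l ∈ Λsf, V i * V l * Cmat x dw i l

variable {V : Fin N → ℝ} {Λfl Λsf : Finset (Fin N)}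

lemma fluidCoupling_isSymm : (fluidCoupling x V dw Λfl).IsSymm :=
  IsSymm.ext fun i j => by simp only [fluidCoupling, of_apply, Cmat_comm x dw i j]; ring

lemma fluidCoupling_nonneg (hV : ∀ i, 0 ≤ V i) (hdw : ∀ r, 0 < r → dw r ≤ 0) (i j : Λfl) :
    0 ≤ fluidCoupling x V dw Λfl i j :=
  mul_nonneg (mul_nonneg (hV i) (hV j)) (Cmat_nonneg hdw i.1 j.1)

lemma surfaceCoupling_nonneg (hV : ∀ i, 0 ≤ V i) (hdw : ∀ r, 0 < r → dw r ≤ 0) (i : Λfl) :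
    0 ≤ surfaceCoupling x V dw Λfl Λsf i :=
  sum_nonneg fun l _ => mul_nonneg (mul_nonneg (hV i) (hV l)) (Cmat_nonneg hdw i.1 l)

lemma exists_reflTransGen_fluidCoupling {R : ℝ} (hV : ∀ i, 0 < V i)
    (hdw : ∀ r, 0 < r → r < R → dw r < 0) (hdw₀ : ∀ r, 0 < r → dw r ≤ 0)
    (hd : Disjoint Λfl Λsf) (hconn : ∀ i ∈ Λfl, Chain x R Λfl Λsf i) (i : Λfl) :
    ∃ j, Relation.ReflTransGen (fun a b => 0 < fluidCoupling x V dw Λfl a b) i j ∧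
      0 < surfaceCoupling x V dw Λfl Λsf j := by
  obtain ⟨j, hij, l, hl, hpos, hlt⟩ :=
    (hconn i i.2).exists_reflTransGen i.2 (disjoint_left.1 hd i.2)
  refine ⟨j, Relation.ReflTransGen.mono (fun a b hab => ?_) _ _ hij, ?_⟩
  · exact mul_pos (mul_pos (hV a) (hV b)) (Cmat_pos hab.1 (hdw _ hab.1 hab.2))
  · refine sum_pos' (fun k _ => mul_nonneg (mul_pos (hV j) (hV k)).le (Cmat_nonneg hdw₀ j k))
      ⟨l, hl, mul_pos (mul_pos (hV j) (hV l)) (Cmat_pos hpos (hdw _ hpos hlt))⟩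

lemma eq_diagonal_mul_dirichletLaplacian_mul_diagonal (hV : ∀ i, V i ≠ 0)
    (hd : Disjoint Λfl Λsf) {A : Matrix Λfl Λfl ℝ}
    (hA : ∀ i j, A i j =
      if i = j then ∑ l ∈ (Λfl ∪ Λsf).erase i.1, (V l / V i.1) * Cmat x dw i.1 l
      else -(Cmat x dw i.1 j.1)) :
    A = diagonal (fun i : Λfl => (V i)⁻¹) *
      dirichletLaplacian (fluidCoupling x V dw Λfl) (surfaceCoupling x V dw Λfl Λsf) *
      diagonal (fun i : Λfl => (V i)⁻¹) := by
  ext i j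
  rw [hA, mul_diagonal, diagonal_mul, dirichletLaplacian, Matrix.sub_apply, diagonal_apply]
  split_ifs with hij
  · subst hij
    have hVi := hV i
    rw [sum_erase _ (by simp [Cmat_self]), sum_union hd, ← sum_coe_sort Λfl]
    simp only [fluidCoupling, surfaceCoupling, of_apply, Cmat_self, mul_zero, sub_zero, add_mul,
      mul_add, sum_mul, mul_sum]
    congr 1 <;> refine sum_congr rfl fun l _ => ?_ <;> field_simp
  · have hVi := hV i
    have hVj := hV j
    simp only [fluidCoupling, of_apply]
    field_simp
    ring

end ISPH

theorem statement2_general (d N : ℕ)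
    (x : Fin N → Pt d)
    (V : Fin N → ℝ) (hV : ∀ i, 0 < V i)
    (w : ℝ → ℝ) (r₀ : ℝ) (hw : IsRefWeight d w r₀)
    (h : ℝ) (hh : 0 < h)
    (Λfl Λsf : Finset (Fin N))
    (hd1 : Disjoint Λfl Λsf)
    (hconn : ∀ i ∈ Λfl, Chain x (r₀ * h) Λfl Λsf i)
    (Ahat : Matrix {i // i ∈ Λfl} {i // i ∈ Λfl} ℝ)
    (hAhat : ∀ i j, Ahat i j =
      if i = j then ∑ l ∈ (Λfl ∪ Λsf).erase i.1, (V l / V i.1) * Cmat x (dwh d h w) i.1 l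
      else -(Cmat x (dwh d h w) i.1 j.1)) :
    Ahat.IsHermitian ∧ Ahat.PosDef ∧
    ∀ b : {i // i ∈ Λfl} → ℝ,
      ∃! p, (Ahat * Matrix.diagonal (fun i : {i // i ∈ Λfl} => V i.1)).mulVec p = b := by
  have hdw₀ : ∀ r, 0 < r → dwh d h w r ≤ 0 := fun r => dwh_nonpos hw hh
  have hL : (dirichletLaplacian (fluidCoupling x V (dwh d h w) Λfl)
      (surfaceCoupling x V (dwh d h w) Λfl Λsf)).PosDef :=
    posDef_dirichletLaplacian fluidCoupling_isSymm
      (fluidCoupling_nonneg (fun i => (hV i).le) hdw₀)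
      (surfaceCoupling_nonneg (fun i => (hV i).le) hdw₀)
      (exists_reflTransGen_fluidCoupling hV (fun r => dwh_neg hw hh) hdw₀ hd1 hconn)
  have hVunit : ∀ i : Λfl, IsUnit (V i) := fun i => (hV i).ne'.isUnit
  have hpd : Ahat.PosDef := by
    rw [eq_diagonal_mul_dirichletLaplacian_mul_diagonal (fun i => (hV i).ne') hd1 hAhat]
    simpa using hL.conjTranspose_mul_mul_same (B := diagonal fun i : Λfl => (V i)⁻¹)
      (mulVec_injective_of_isUnit (isUnit_diagonal.2 (Pi.isUnit_iff.2 fun i => (hVunit i).inv)))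
  have hunit : IsUnit (Ahat * diagonal fun i : Λfl => V i) :=
    hpd.isUnit.mul (isUnit_diagonal.2 (Pi.isUnit_iff.2 hVunit))
  exact ⟨hpd.isHermitian, hpd, Function.Bijective.existsUnique
    ⟨mulVec_injective_of_isUnit hunit, mulVec_surjective_iff_isUnit.2 hunit⟩⟩

/-- under the surface connectivity condition, the pressure Poisson
matrix of the ISPH method is symmetric positive definite, and the discrete pressure
Poisson equation is uniquely solvable. -/
theorem statement2 (d N : ℕ) (hd : d = 2 ∨ d = 3)
    (x : Fin N → Pt d) (hx : Function.Injective x)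
    (V : Fin N → ℝ) (hV : ∀ i, 0 < V i)
    (w : ℝ → ℝ) (r₀ : ℝ) (hw : IsRefWeight d w r₀)
    (h : ℝ) (hh : 0 < h)
    (Λfl Λsf Λwl : Finset (Fin N))
    (hd1 : Disjoint Λfl Λsf) (hd2 : Disjoint Λfl Λwl) (hd3 : Disjoint Λsf Λwl)
    (hcover : Λfl ∪ Λsf ∪ Λwl = Finset.univ)
    (hconn : ∀ i ∈ Λfl, Chain x (r₀ * h) Λfl Λsf i)
    (Ahat : Matrix {i // i ∈ Λfl} {i // i ∈ Λfl} ℝ)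
    (hAhat : ∀ i j, Ahat i j =
      if i = j then ∑ l ∈ (Λfl ∪ Λsf).erase i.1, (V l / V i.1) * Cmat x (dwh d h w) i.1 l
      else -(Cmat x (dwh d h w) i.1 j.1)) :
    Ahat.IsHermitian ∧ Ahat.PosDef ∧
    ∀ b : {i // i ∈ Λfl} → ℝ,
      ∃! p, (Ahat * Matrix.diagonal (fun i : {i // i ∈ Λfl} => V i.1)).mulVec p = b :=
  statement2_general d N x V hV w r₀ hw h hh Λfl Λsf hd1 hconn Ahat hAhat
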